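/- arXiv:1104.3696 — 8 statements merged into one kernel-verified Lean document; each statement's English description precedes it below -/
import Mathlib

section
/- Let N ≥ 1 and let b : ℝ × (EuclideanSpace ℝ (Fin N)) → EuclideanSpace ℝ (Fin N) be continuous and Lipschitz in the space variable with a Lipschitz constant uniform in time. Suppose Φ : ℝ → ℝ → EuclideanSpace ℝ (Fin N) → EuclideanSpace ℝ (Fin N) is such that for every (t₀, x₀) the curve t ↦ Φ(t, t₀, x₀) is differentiable with derivative b(t, Φ(t, t₀, x₀)) and Φ(t₀, t₀, x₀) = x₀. Fix t ∈ ℝ and suppose that the map (s, y) ↦ Φ(t, s, y) is (Fréchet) differentiable at (t₀, x). Then ∂Φ/∂t₂(t, t₀, x) + D₃Φ(t, t₀, x)(b(t₀, x)) = 0, where ∂Φ/∂t₂ denotes the partial derivative in the second argument and D₃Φ(t, t₀, x) the Fréchet derivative (Jacobian) in the third argument. -/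
open Set

/-! Both `u ↦ Φ u s (Φ s t₀ x)` and `u ↦ Φ u t₀ x` solve the ODE and agree at `u = s`, so
by uniqueness `Φ t s (Φ s t₀ x) = Φ t t₀ x` for all `s`. Differentiating this constant in `s`
at `s = t₀` by the chain rule, along the curve `s ↦ (s, Φ s t₀ x)` whose velocity at `t₀`
is `(1, b (t₀, x))`, gives `D (1, b (t₀, x)) = 0`. -/

theorem flow_apply_flow_eq {E : Type*} [NormedAddCommGroup E] [NormedSpace ℝ E]
    {v : ℝ → E → E} {K : NNReal} (hv : ∀ t, LipschitzWith K (v t))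
    {Φ : ℝ → ℝ → E → E}
    (hΦ_deriv : ∀ t₀ x₀ t, HasDerivAt (fun s => Φ s t₀ x₀) (v t (Φ t t₀ x₀)) t)
    (hΦ_init : ∀ t₀ x₀, Φ t₀ t₀ x₀ = x₀) (t s t₀ : ℝ) (x : E) :
    Φ t s (Φ s t₀ x) = Φ t t₀ x :=
  congrFun (ODE_solution_unique_univ (s := fun _ => univ) (t₀ := s)
    (fun u => (hv u).lipschitzOnWith) (fun u => ⟨hΦ_deriv s (Φ s t₀ x) u, trivial⟩)
    (fun u => ⟨hΦ_deriv t₀ x u, trivial⟩) (hΦ_init s _)) t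

theorem flow_derivative_identity_general
    (N : ℕ)
    (b : ℝ × EuclideanSpace ℝ (Fin N) → EuclideanSpace ℝ (Fin N))
    (K : NNReal)
    (hb_lip : ∀ t : ℝ, LipschitzWith K (fun x => b (t, x)))
    (Φ : ℝ → ℝ → EuclideanSpace ℝ (Fin N) → EuclideanSpace ℝ (Fin N))
    (hΦ_deriv : ∀ (t₀ : ℝ) (x₀ : EuclideanSpace ℝ (Fin N)) (t : ℝ),
      HasDerivAt (fun s => Φ s t₀ x₀) (b (t, Φ t t₀ x₀)) t)
    (hΦ_init : ∀ (t₀ : ℝ) (x₀ : EuclideanSpace ℝ (Fin N)), Φ t₀ t₀ x₀ = x₀)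
    (t t₀ : ℝ) (x : EuclideanSpace ℝ (Fin N))
    (D : ℝ × EuclideanSpace ℝ (Fin N) →L[ℝ] EuclideanSpace ℝ (Fin N))
    (hD : HasFDerivAt (fun p : ℝ × EuclideanSpace ℝ (Fin N) => Φ t p.1 p.2) D (t₀, x)) :
    D (1, 0) + D (0, b (t₀, x)) = 0 := by
  have hcurve : HasDerivAt (fun s => (s, Φ s t₀ x)) (1, b (t₀, x)) t₀ := by
    simpa only [hΦ_init] using (hasDerivAt_id' t₀).prodMk (hΦ_deriv t₀ x t₀)
  have hcomp : HasDerivAt (fun s => Φ t s (Φ s t₀ x)) (D (1, b (t₀, x))) t₀ := by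
    rw [← hΦ_init t₀ x] at hD
    exact hD.comp_hasDerivAt t₀ hcurve
  have hconst : (fun s => Φ t s (Φ s t₀ x)) = fun _ => Φ t t₀ x :=
    funext fun s =>
      flow_apply_flow_eq (v := fun u y => b (u, y)) hb_lip hΦ_deriv hΦ_init t s t₀ x
  rw [hconst] at hcomp
  rw [← D.map_add, Prod.mk_add_mk, add_zero, zero_add]
  exact hcomp.unique (hasDerivAt_const t₀ _)

/-- Differentiating the identity `Φ(t, t₀, Φ(t₀, t, x₀)) = x₀` in `t₀`:
if `(s, y) ↦ Φ(t, s, y)` is Fréchet differentiable at `(t₀, x)` with derivative `D`, then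
`∂Φ/∂t₂(t, t₀, x) + D₃Φ(t, t₀, x)(b(t₀, x)) = 0`. -/
theorem flow_derivative_identity
    (N : ℕ) (hN : 1 ≤ N)
    (b : ℝ × EuclideanSpace ℝ (Fin N) → EuclideanSpace ℝ (Fin N))
    (hb_cont : Continuous b)
    (K : NNReal)
    (hb_lip : ∀ t : ℝ, LipschitzWith K (fun x => b (t, x)))
    (Φ : ℝ → ℝ → EuclideanSpace ℝ (Fin N) → EuclideanSpace ℝ (Fin N))
    (hΦ_deriv : ∀ (t₀ : ℝ) (x₀ : EuclideanSpace ℝ (Fin N)) (t : ℝ),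
      HasDerivAt (fun s => Φ s t₀ x₀) (b (t, Φ t t₀ x₀)) t)
    (hΦ_init : ∀ (t₀ : ℝ) (x₀ : EuclideanSpace ℝ (Fin N)), Φ t₀ t₀ x₀ = x₀)
    (t t₀ : ℝ) (x : EuclideanSpace ℝ (Fin N))
    (D : ℝ × EuclideanSpace ℝ (Fin N) →L[ℝ] EuclideanSpace ℝ (Fin N))
    (hD : HasFDerivAt (fun p : ℝ × EuclideanSpace ℝ (Fin N) => Φ t p.1 p.2) D (t₀, x)) :
    D (1, 0) + D (0, b (t₀, x)) = 0 :=
  flow_derivative_identity_general N b K hb_lip Φ hΦ_deriv hΦ_init t t₀ x D hD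
end

section
/- Let g : ℝ → ℝ be twice continuously differentiable with g'(y) ≤ μ and |g''(y)| ≤ K for all y ∈ ℝ, where μ > 0 and K > 0 are constants. Let ξ ∈ ℝ, let Y : [0, ∞) → ℝ be differentiable with Y'(τ) = g(Y(τ)) and Y(0) = ξ, let Z : [0, ∞) → ℝ be differentiable with Z'(τ) = g'(Y(τ)) Z(τ) and Z(0) = 1, and let W : [0, ∞) → ℝ be differentiable with W'(τ) = g'(Y(τ)) W(τ) + g''(Y(τ)) Z(τ)² and W(0) = 0. Then |W(τ)| ≤ (K/μ)(e^{μτ} - 1) Z(τ) for all τ ≥ 0. -/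
/-!
`Z` solves a linear equation with a continuous coefficient, so at a first zero it would agree with
the zero solution, and backward uniqueness would give `Z 0 = 0`; hence `Z > 0`, and `Z' ≤ μ Z`
then gives `Z ≤ e^{μτ}`. By variation of constants, `R = W / Z` satisfies `R' = g''(Y) Z`, so
`|R'| ≤ K e^{μτ}`, and since `R 0 = 0` this integrates to `|R| ≤ (K/μ)(e^{μτ} - 1)`.
-/

open Set

lemma pos_of_hasDerivAt_eq_mul_self {a f : ℝ → ℝ} (ha : ContinuousOn a (Ici 0))
    (hf : ∀ t, 0 ≤ t → HasDerivAt f (a t * f t) t) (hf0 : 0 < f 0) :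
    ∀ t, 0 ≤ t → 0 < f t := by
  intro t ht
  by_contra! hft
  have hfc : ContinuousOn f (Icc 0 t) := fun s hs => (hf s hs.1).continuousAt.continuousWithinAt
  obtain ⟨t₀, ⟨ht₀, ht₀t⟩, hft₀⟩ := intermediate_value_Icc' ht hfc ⟨hft, hf0.le⟩
  obtain ⟨M, hM⟩ :=
    isCompact_Icc.exists_bound_of_continuousOn (ha.mono (Icc_subset_Ici_self : Icc 0 t₀ ⊆ Ici 0))
  have hlip : ∀ s ∈ Ioc 0 t₀, LipschitzOnWith M.toNNReal (a s * ·) univ := by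
    refine fun s hs => LipschitzOnWith.of_dist_le_mul fun x _ y _ => ?_
    rw [Real.dist_eq, Real.dist_eq, ← mul_sub, abs_mul, Real.coe_toNNReal']
    exact mul_le_mul_of_nonneg_right ((hM s (Ioc_subset_Icc_self hs)).trans (le_max_left _ _))
      (abs_nonneg _)
  have hzero : EqOn f (fun _ => (0 : ℝ)) (Icc 0 t₀) :=
    ODE_solution_unique_of_mem_Icc_left hlip (hfc.mono (Icc_subset_Icc_right ht₀t))
      (fun s hs => (hf s hs.1.le).hasDerivWithinAt) (fun _ _ => mem_univ _) continuousOn_const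
      (fun s _ => by simpa using hasDerivWithinAt_const s (Iic s) (0 : ℝ)) (fun _ _ => mem_univ _)
      hft₀
  exact hf0.ne' (hzero ⟨le_rfl, ht₀⟩)

lemma le_mul_exp_of_deriv_le_mul {f f' : ℝ → ℝ} {μ : ℝ}
    (hf : ∀ t, 0 ≤ t → HasDerivAt f (f' t) t) (hf' : ∀ t, 0 ≤ t → f' t ≤ μ * f t) :
    ∀ t, 0 ≤ t → f t ≤ f 0 * Real.exp (μ * t) := by
  intro t ht
  have hgronwall := le_gronwallBound_of_liminf_deriv_right_le (ε := 0) (b := t)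
    (fun s hs => (hf s hs.1).continuousAt.continuousWithinAt)
    (fun s hs _ hr => (hf s hs.1).hasDerivWithinAt.liminf_right_slope_le hr) le_rfl
    (fun s hs => by simpa using hf' s hs.1) t ⟨ht, le_rfl⟩
  rwa [sub_zero, gronwallBound_ε0] at hgronwall

lemma hasDerivAt_div_of_linear {W Z : ℝ → ℝ} {a b t : ℝ}
    (hW : HasDerivAt W (a * W t + b) t) (hZ : HasDerivAt Z (a * Z t) t) (hZt : Z t ≠ 0) :
    HasDerivAt (fun s => W s / Z s) (b / Z t) t := by
  refine (hW.div hZ hZt).congr_deriv ?_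
  field_simp
  ring

lemma abs_le_of_abs_deriv_le_exp {R R' : ℝ → ℝ} {μ K : ℝ} (hμ : μ ≠ 0)
    (hR : ∀ t, 0 ≤ t → HasDerivAt R (R' t) t) (hR0 : R 0 = 0)
    (hR' : ∀ t, 0 ≤ t → |R' t| ≤ K * Real.exp (μ * t)) :
    ∀ t, 0 ≤ t → |R t| ≤ K / μ * (Real.exp (μ * t) - 1) := by
  intro t ht
  have hB : ∀ s,
      HasDerivAt (fun s => K / μ * (Real.exp (μ * s) - 1)) (K * Real.exp (μ * s)) s := by
    intro s
    refine ((((hasDerivAt_id s).const_mul μ).exp.sub_const 1).const_mul (K / μ)).congr_deriv ?_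
    simp only [id, mul_one]
    field_simp
  exact image_norm_le_of_norm_deriv_right_le_deriv_boundary
    (fun s hs => (hR s hs.1).continuousAt.continuousWithinAt)
    (fun s hs => (hR s hs.1).hasDerivWithinAt) (by simp [hR0]) hB
    (fun s hs => hR' s hs.1) ⟨ht, le_rfl⟩

theorem second_variation_bound_general
    (μ K : ℝ) (hμ : 0 < μ)
    (g : ℝ → ℝ) (hg : ContDiff ℝ 2 g)
    (hg' : ∀ y : ℝ, deriv g y ≤ μ)
    (hg'' : ∀ y : ℝ, |deriv (deriv g) y| ≤ K)
    (Y : ℝ → ℝ)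
    (hY : ∀ τ : ℝ, 0 ≤ τ → HasDerivAt Y (g (Y τ)) τ)
    (Z : ℝ → ℝ)
    (hZ : ∀ τ : ℝ, 0 ≤ τ → HasDerivAt Z (deriv g (Y τ) * Z τ) τ) (hZ0 : Z 0 = 1)
    (W : ℝ → ℝ)
    (hW : ∀ τ : ℝ, 0 ≤ τ →
      HasDerivAt W (deriv g (Y τ) * W τ + deriv (deriv g) (Y τ) * (Z τ)^2) τ)
    (hW0 : W 0 = 0) :
    ∀ τ : ℝ, 0 ≤ τ → |W τ| ≤ (K / μ) * (Real.exp (μ * τ) - 1) * Z τ := by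
  have hZpos : ∀ τ, 0 ≤ τ → 0 < Z τ :=
    pos_of_hasDerivAt_eq_mul_self
      ((hg.continuous_deriv (by norm_num)).comp_continuousOn
        fun τ hτ => (hY τ hτ).continuousAt.continuousWithinAt) hZ (hZ0 ▸ one_pos)
  have hZexp : ∀ τ, 0 ≤ τ → Z τ ≤ Real.exp (μ * τ) := by
    simpa [hZ0] using le_mul_exp_of_deriv_le_mul hZ
      fun τ hτ => mul_le_mul_of_nonneg_right (hg' (Y τ)) (hZpos τ hτ).le
  have hR : ∀ τ, 0 ≤ τ →
      HasDerivAt (fun s => W s / Z s) (deriv (deriv g) (Y τ) * Z τ) τ := fun τ hτ => by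
    simpa [sq, mul_div_assoc, (hZpos τ hτ).ne'] using
      hasDerivAt_div_of_linear (hW τ hτ) (hZ τ hτ) (hZpos τ hτ).ne'
  have hR' : ∀ τ, 0 ≤ τ → |deriv (deriv g) (Y τ) * Z τ| ≤ K * Real.exp (μ * τ) := fun τ hτ => by
    rw [abs_mul, abs_of_pos (hZpos τ hτ)]
    exact mul_le_mul (hg'' _) (hZexp τ hτ) (hZpos τ hτ).le ((abs_nonneg _).trans (hg'' 0))
  intro τ hτ
  have hbound := abs_le_of_abs_deriv_le_exp hμ.ne' hR (by simp [hW0]) hR' τ hτ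
  rwa [abs_div, abs_of_pos (hZpos τ hτ), div_le_iff₀ (hZpos τ hτ)] at hbound

/-- Bound on the second variation `W` of the scalar autonomous ODE
`Y' = g(Y)`: `|W(τ)| ≤ (K/μ)(e^{μτ} - 1) Z(τ)` when `g' ≤ μ` and `|g''| ≤ K`. -/
theorem second_variation_bound
    (μ K : ℝ) (hμ : 0 < μ) (hK : 0 < K)
    (g : ℝ → ℝ) (hg : ContDiff ℝ 2 g)
    (hg' : ∀ y : ℝ, deriv g y ≤ μ)
    (hg'' : ∀ y : ℝ, |deriv (deriv g) y| ≤ K)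
    (ξ : ℝ)
    (Y : ℝ → ℝ)
    (hY : ∀ τ : ℝ, 0 ≤ τ → HasDerivAt Y (g (Y τ)) τ) (hY0 : Y 0 = ξ)
    (Z : ℝ → ℝ)
    (hZ : ∀ τ : ℝ, 0 ≤ τ → HasDerivAt Z (deriv g (Y τ) * Z τ) τ) (hZ0 : Z 0 = 1)
    (W : ℝ → ℝ)
    (hW : ∀ τ : ℝ, 0 ≤ τ →
      HasDerivAt W (deriv g (Y τ) * W τ + deriv (deriv g) (Y τ) * (Z τ)^2) τ)
    (hW0 : W 0 = 0) :
    ∀ τ : ℝ, 0 ≤ τ → |W τ| ≤ (K / μ) * (Real.exp (μ * τ) - 1) * Z τ :=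
  second_variation_bound_general μ K hμ g hg hg' hg'' Y hY Z hZ hZ0 W hW hW0
end

section
/- Let N ≥ 1, let Ω₀ ⊆ EuclideanSpace ℝ (Fin N) be a nonempty open bounded convex set, and let u₀ : EuclideanSpace ℝ (Fin N) → ℝ be Lipschitz with Lipschitz constant K and satisfy u₀(y) = 0 for every y ∉ Ω₀. Let x₀ be a point of the frontier of Ω₀ and let n₀ be a unit vector such that ⟨y - x₀, n₀⟩ ≤ 0 for all y ∈ Ω₀. Then u₀(x) ≤ -K ⟨x - x₀, n₀⟩ for all x ∈ Ω₀. -/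
/-!
The foot `y` of the perpendicular from `x` to the supporting hyperplane `⟪· - x₀, n₀⟫ = 0`
lies at distance `-⟪x - x₀, n₀⟫` from `x`. Since the open set `Ω₀` lies in the closed half-space,
it lies in the open one, so `y ∉ Ω₀` and `u₀ y = 0`; the Lipschitz bound from `y` to `x` is the claim.
-/

open Filter Topology
open scoped RealInnerProductSpace

section HalfSpace

variable {E : Type*} [NormedAddCommGroup E] [InnerProductSpace ℝ E]

theorem IsOpen.inner_sub_lt_zero {Ω : Set E} (hΩ : IsOpen Ω) {x₀ n : E} (hn : n ≠ 0)
    (hsupp : ∀ y ∈ Ω, ⟪y - x₀, n⟫ ≤ 0) {y : E} (hy : y ∈ Ω) : ⟪y - x₀, n⟫ < 0 := by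
  have hpath : Tendsto (fun t : ℝ => y + t • n) (𝓝 0) (𝓝 y) := by
    simpa using (show Continuous (fun t : ℝ => y + t • n) by fun_prop).tendsto 0
  have hnear : ∀ᶠ t in 𝓝[>] (0 : ℝ), y + t • n ∈ Ω :=
    nhdsWithin_le_nhds (hpath.eventually (hΩ.mem_nhds hy))
  obtain ⟨t, ht_mem, ht_pos⟩ := (hnear.and self_mem_nhdsWithin).exists
  have hle := hsupp _ ht_mem
  rw [show y + t • n - x₀ = (y - x₀) + t • n by abel, inner_add_left, real_inner_smul_left,
    real_inner_self_eq_norm_sq] at hle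
  have : 0 < t * ‖n‖ ^ 2 := by have := norm_pos_iff.mpr hn; positivity
  linarith

theorem exists_inner_sub_eq_zero_dist_eq (x₀ x : E) {n : E} (hn : ‖n‖ = 1) :
    ∃ y, ⟪y - x₀, n⟫ = 0 ∧ dist x y = |⟪x - x₀, n⟫| := by
  refine ⟨x - ⟪x - x₀, n⟫ • n, ?_, ?_⟩
  · rw [show x - ⟪x - x₀, n⟫ • n - x₀ = (x - x₀) - ⟪x - x₀, n⟫ • n by abel, inner_sub_left,
      real_inner_smul_left, real_inner_self_eq_norm_sq, hn]
    ring
  · rw [dist_eq_norm, sub_sub_cancel, norm_smul, hn, mul_one, Real.norm_eq_abs]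

end HalfSpace

theorem lipschitz_convex_support_bound_general
    (N : ℕ)
    (Ω₀ : Set (EuclideanSpace ℝ (Fin N)))
    (hΩ₀_open : IsOpen Ω₀)
    (K : NNReal)
    (u₀ : EuclideanSpace ℝ (Fin N) → ℝ)
    (hu₀_lip : LipschitzWith K u₀)
    (hu₀_zero : ∀ y, y ∉ Ω₀ → u₀ y = 0)
    (x₀ : EuclideanSpace ℝ (Fin N))
    (n₀ : EuclideanSpace ℝ (Fin N)) (hn₀ : ‖n₀‖ = 1)
    (hsupp : ∀ y ∈ Ω₀, (inner ℝ (y - x₀) n₀ : ℝ) ≤ 0) :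
    ∀ x ∈ Ω₀, u₀ x ≤ -(K : ℝ) * (inner ℝ (x - x₀) n₀ : ℝ) := by
  intro x hx
  obtain ⟨y, hy_plane, hxy⟩ := exists_inner_sub_eq_zero_dist_eq x₀ x hn₀
  have hy_out : y ∉ Ω₀ := fun hy =>
    (hΩ₀_open.inner_sub_lt_zero (by simp [← norm_ne_zero_iff, hn₀])
      hsupp hy).ne hy_plane
  calc u₀ x ≤ u₀ y + K * dist x y := hu₀_lip.le_add_mul x y
    _ = -(K : ℝ) * ⟪x - x₀, n₀⟫ := by
      rw [hu₀_zero y hy_out, hxy, abs_of_nonpos (hsupp x hx)]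
      ring

/-- If `u₀` is `K`-Lipschitz, vanishes outside the open bounded convex set
`Ω₀`, and `n₀` is an outward unit normal at a frontier point `x₀` (supporting hyperplane),
then `u₀(x) ≤ -K ⟨x - x₀, n₀⟩` on `Ω₀`. -/
theorem lipschitz_convex_support_bound
    (N : ℕ) (hN : 1 ≤ N)
    (Ω₀ : Set (EuclideanSpace ℝ (Fin N)))
    (hΩ₀_ne : Ω₀.Nonempty) (hΩ₀_open : IsOpen Ω₀)
    (hΩ₀_bdd : Bornology.IsBounded Ω₀) (hΩ₀_conv : Convex ℝ Ω₀)
    (K : NNReal)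
    (u₀ : EuclideanSpace ℝ (Fin N) → ℝ)
    (hu₀_lip : LipschitzWith K u₀)
    (hu₀_zero : ∀ y, y ∉ Ω₀ → u₀ y = 0)
    (x₀ : EuclideanSpace ℝ (Fin N)) (hx₀ : x₀ ∈ frontier Ω₀)
    (n₀ : EuclideanSpace ℝ (Fin N)) (hn₀ : ‖n₀‖ = 1)
    (hsupp : ∀ y ∈ Ω₀, (inner ℝ (y - x₀) n₀ : ℝ) ≤ 0) :
    ∀ x ∈ Ω₀, u₀ x ≤ -(K : ℝ) * (inner ℝ (x - x₀) n₀ : ℝ) :=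
  lipschitz_convex_support_bound_general N Ω₀ hΩ₀_open K u₀ hu₀_lip hu₀_zero x₀ n₀ hn₀ hsupp
end

section
/- Let m ≥ 2 be a real number, c* > 0, and U : ℝ → ℝ be continuous with U(z) = 0 for z ≥ 0, 0 < U(z) < 1 for z < 0, lim_{z → -∞} U(z) = 1, U twice continuously differentiable on (-∞, 0), z ↦ U(z)^m continuously differentiable on ℝ with (U^m)'(0) = 0 and twice differentiable on (-∞, 0), and (U^m)''(z) + c* U'(z) + U(z)(1 - U(z)) = 0 for all z < 0. Then U'(z) < 0 for all z < 0. -/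
/-!
Put `V = U ^ m`. For `z < 0` we have `V' = m U^(m-1) U'`, so `V'` and `U'` have the same sign,
and at a zero of `V'` the equation reduces to `V'' = -U (1 - U) < 0`: `V'` can only cross zero
downwards. Hence if `V'(z₀) > 0`, then `V' > 0` on all of `(-∞, z₀]`, so `V` increases there
from its limit `1` at `-∞`, contradicting `V(z₀) < 1`. Thus `V' ≤ 0` on `(-∞, 0)`, and a zero
of `V'` is impossible since `V'` would be positive just to its left.
-/

open Filter Set Topology

namespace HasDerivAt

variable {f : ℝ → ℝ} {f' x : ℝ}

theorem eventually_nhdsGT_lt_of_neg (hf : HasDerivAt f f' x) (hf' : f' < 0) :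
    ∀ᶠ y in 𝓝[>] x, f y < f x := by
  filter_upwards [(hasDerivAt_iff_tendsto_slope_left_right.mp hf).2.eventually_lt_const hf',
    self_mem_nhdsWithin] with y hslope (hxy : x < y)
  rw [slope_def_field, div_neg_iff] at hslope
  rcases hslope with ⟨-, hneg⟩ | ⟨hneg, -⟩ <;> linarith

theorem eventually_nhdsLT_gt_of_neg (hf : HasDerivAt f f' x) (hf' : f' < 0) :
    ∀ᶠ y in 𝓝[<] x, f x < f y := by
  filter_upwards [(hasDerivAt_iff_tendsto_slope_left_right.mp hf).1.eventually_lt_const hf',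
    self_mem_nhdsWithin] with y hslope (hyx : y < x)
  rw [slope_def_field, div_neg_iff] at hslope
  rcases hslope with ⟨hpos, -⟩ | ⟨-, hpos⟩ <;> linarith

end HasDerivAt

/-- The last zero of `f` before `y` would be followed by positive values only. -/
theorem pos_of_pos_of_eventually_neg_after_zero {f : ℝ → ℝ} {x y : ℝ} (hxy : x ≤ y)
    (hf : ContinuousOn f (Icc x y))
    (hcross : ∀ a ∈ Ico x y, f a = 0 → ∀ᶠ z in 𝓝[>] a, f z < 0) (hy : 0 < f y) :
    0 < f x := by
  by_contra! hx
  set S := Icc x y ∩ f ⁻¹' {0}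
  have hS_closed : IsClosed S := hf.preimage_isClosed_of_isClosed isClosed_Icc isClosed_singleton
  have hS_bdd : BddAbove S := bddAbove_Icc.mono inter_subset_left
  have zero_mem_of_nonpos (z : ℝ) (hz : z ∈ Icc x y) (hfz : f z ≤ 0) : ∃ c ∈ Icc z y, c ∈ S := by
    obtain ⟨c, hc, hfc⟩ :=
      intermediate_value_Icc hz.2 (hf.mono (Icc_subset_Icc_left hz.1)) ⟨hfz, hy.le⟩
    exact ⟨c, hc, ⟨hz.1.trans hc.1, hc.2⟩, hfc⟩
  obtain ⟨c, -, hcS⟩ := zero_mem_of_nonpos x (left_mem_Icc.mpr hxy) hx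
  have ha : sSup S ∈ S := hS_closed.csSup_mem ⟨c, hcS⟩ hS_bdd
  set a := sSup S
  have hay : a < y := ha.1.2.lt_of_ne fun h => hy.ne' (h ▸ ha.2)
  obtain ⟨z, hfz, haz, hzy⟩ :=
    ((hcross a ⟨ha.1.1, hay⟩ ha.2).and (Ioo_mem_nhdsGT hay)).exists
  obtain ⟨c, hc, hcS⟩ := zero_mem_of_nonpos z ⟨ha.1.1.trans haz.le, hzy.le⟩ hfz.le
  exact (le_csSup hS_bdd hcS).not_gt (haz.trans_le hc.1)

theorem deriv_neg_of_tendsto_atBot {V : ℝ → ℝ} {b L : ℝ} (hV : ContDiff ℝ 1 V)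
    (hV_lim : Tendsto V atBot (𝓝 L)) (hV_lt : ∀ z < b, V z < L)
    (hV₂ : ∀ a < b, DifferentiableAt ℝ (deriv V) a)
    (hcross : ∀ a < b, deriv V a = 0 → deriv (deriv V) a < 0) :
    ∀ z < b, deriv V z < 0 := by
  have hV' : Continuous (deriv V) := hV.continuous_deriv le_rfl
  have hnonpos : ∀ z < b, deriv V z ≤ 0 := by
    intro z hz
    by_contra! hpos
    have hpos_left : ∀ x ≤ z, 0 < deriv V x := fun x hxz =>
      pos_of_pos_of_eventually_neg_after_zero hxz hV'.continuousOn
        (fun a ha ha0 => by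
          simpa [ha0] using (hV₂ a (ha.2.trans hz)).hasDerivAt.eventually_nhdsGT_lt_of_neg
            (hcross a (ha.2.trans hz) ha0))
        hpos
    have hmono : MonotoneOn V (Iic z) :=
      (strictMonoOn_of_deriv_pos (convex_Iic z) hV.continuous.continuousOn fun x hx =>
        hpos_left x (interior_subset hx : x ∈ Iic z)).monotoneOn
    have hL : L ≤ V z := le_of_tendsto hV_lim <| by
      filter_upwards [eventually_le_atBot z] with x hx using hmono hx self_mem_Iic hx
    exact (hV_lt z hz).not_ge hL
  intro z hz
  refine (hnonpos z hz).lt_of_ne fun hz0 => ?_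
  obtain ⟨y, hy, hyz⟩ := ((hV₂ z hz).hasDerivAt.eventually_nhdsLT_gt_of_neg
    (hcross z hz hz0) |>.and self_mem_nhdsWithin).exists
  exact (hnonpos y (hyz.trans hz)).not_gt (hz0 ▸ hy)

section RpowDeriv

variable {U : ℝ → ℝ} {u' m z : ℝ}

theorem deriv_rpow_comp_eq_mul (hU : HasDerivAt U u' z) (hUz : 0 < U z) :
    deriv (fun x => U x ^ m) z = u' * (m * U z ^ (m - 1)) := by
  rw [(hU.rpow_const (Or.inl hUz.ne')).deriv, mul_assoc]

theorem deriv_rpow_comp_neg_iff (hU : HasDerivAt U u' z) (hUz : 0 < U z)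
    (hm : 0 < m) : deriv (fun x => U x ^ m) z < 0 ↔ u' < 0 := by
  have hk : 0 < m * U z ^ (m - 1) := mul_pos hm (Real.rpow_pos_of_pos hUz _)
  rw [deriv_rpow_comp_eq_mul hU hUz]
  exact ⟨fun h => neg_of_mul_neg_left h hk.le, fun h => mul_neg_of_neg_of_pos h hk⟩

theorem deriv_rpow_comp_eq_zero_iff (hU : HasDerivAt U u' z) (hUz : 0 < U z)
    (hm : 0 < m) : deriv (fun x => U x ^ m) z = 0 ↔ u' = 0 := by
  rw [deriv_rpow_comp_eq_mul hU hUz,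
    mul_eq_zero_iff_right (mul_pos hm (Real.rpow_pos_of_pos hUz _)).ne']

end RpowDeriv

theorem travelling_wave_deriv_neg_general
    (m cstar : ℝ) (U : ℝ → ℝ)
    (hm : 2 ≤ m)
    (hU01 : ∀ z : ℝ, z < 0 → 0 < U z ∧ U z < 1)
    (hUlim : Tendsto U atBot (nhds 1))
    (hUC2 : ContDiffOn ℝ 2 U (Set.Iio 0))
    (hVm : ContDiff ℝ 1 (fun z => U z ^ m))
    (hVm2 : ∀ z : ℝ, z < 0 → DifferentiableAt ℝ (deriv (fun z => U z ^ m)) z)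
    (hODE : ∀ z : ℝ, z < 0 →
      deriv (deriv (fun z => U z ^ m)) z + cstar * deriv U z + U z * (1 - U z) = 0) :
    ∀ z : ℝ, z < 0 → deriv U z < 0 := by
  have hm0 : 0 < m := by linarith
  have hU' : ∀ z < 0, HasDerivAt U (deriv U z) z := fun z hz =>
    ((hUC2.differentiableOn (by simp)).differentiableAt (Iio_mem_nhds hz)).hasDerivAt
  have hVlim : Tendsto (fun z => U z ^ m) atBot (𝓝 1) := by
    simpa [Function.comp_def] using
      (Real.continuousAt_rpow_const 1 m (Or.inl one_ne_zero)).tendsto.comp hUlim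
  have hVlt : ∀ z < 0, U z ^ m < 1 := fun z hz =>
    Real.rpow_lt_one (hU01 z hz).1.le (hU01 z hz).2 hm0
  have hcross : ∀ a < 0, deriv (fun z => U z ^ m) a = 0 →
      deriv (deriv (fun z => U z ^ m)) a < 0 := by
    intro a ha ha0
    have hUa' : deriv U a = 0 :=
      (deriv_rpow_comp_eq_zero_iff (hU' a ha) (hU01 a ha).1 hm0).mp ha0
    have hode := hODE a ha
    rw [hUa', mul_zero] at hode
    linarith [mul_pos (hU01 a ha).1 (sub_pos.mpr (hU01 a ha).2)]
  intro z hz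
  exact (deriv_rpow_comp_neg_iff (hU' z hz) (hU01 z hz).1 hm0).mp
    (deriv_neg_of_tendsto_atBot hVm hVlim hVlt hVm2 hcross z hz)

/-- The sharp minimal travelling wave is strictly decreasing on the
negative half-line: U'(z) < 0 for all z < 0. -/
theorem travelling_wave_deriv_neg
    (m cstar : ℝ) (U : ℝ → ℝ)
    (hm : 2 ≤ m) (hc : 0 < cstar)
    (hUcont : Continuous U)
    (hU0 : ∀ z : ℝ, 0 ≤ z → U z = 0)
    (hU01 : ∀ z : ℝ, z < 0 → 0 < U z ∧ U z < 1)
    (hUlim : Tendsto U atBot (nhds 1))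
    (hUC2 : ContDiffOn ℝ 2 U (Set.Iio 0))
    (hVm : ContDiff ℝ 1 (fun z => U z ^ m))
    (hVm0 : deriv (fun z => U z ^ m) 0 = 0)
    (hVm2 : ∀ z : ℝ, z < 0 → DifferentiableAt ℝ (deriv (fun z => U z ^ m)) z)
    (hODE : ∀ z : ℝ, z < 0 →
      deriv (deriv (fun z => U z ^ m)) z + cstar * deriv U z + U z * (1 - U z) = 0) :
    ∀ z : ℝ, z < 0 → deriv U z < 0 :=
  travelling_wave_deriv_neg_general m cstar U hm hU01 hUlim hUC2 hVm hVm2 hODE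
end

section
/- Let m ≥ 2 be a real number, c* > 0, and U : ℝ → ℝ be continuous with U(z) = 0 for z ≥ 0, 0 < U(z) < 1 for z < 0, lim_{z → -∞} U(z) = 1, U twice continuously differentiable on (-∞, 0), z ↦ U(z)^m continuously differentiable on ℝ with (U^m)'(0) = 0 and twice differentiable on (-∞, 0), and (U^m)''(z) + c* U'(z) + U(z)(1 - U(z)) = 0 for all z < 0. Assume moreover U'(z) < 0 for all z < 0. Then there exists C > 0 such that |(U^m)'(z)| ≤ C · U(z) for all z ∈ ℝ. -/
open Filter Set

/-!
Write `V = U ^ m`. By the travelling-wave equation the flux `V' + c* U` has derivative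
`-U (1 - U) < 0` on `(-∞, 0)`, and it vanishes at `0`, so `-V' < c* U` to the left of the front.
Since `U` is decreasing, so is `V`, hence `|V'| = -V' ≤ c* U` there; to the right of the front
`V` is constant and both sides vanish.
-/

lemma deriv_rpow_const_nonpos {f : ℝ → ℝ} {m x : ℝ} (hm : 0 ≤ m)
    (hf : DifferentiableAt ℝ f x) (hfx : 0 < f x) (hf' : deriv f x ≤ 0) :
    deriv (fun y => f y ^ m) x ≤ 0 := by
  have hderiv : HasDerivAt (fun y => f y ^ m) (m * f x ^ (m - 1) * deriv f x) x :=
    (Real.hasDerivAt_rpow_const (Or.inl hfx.ne')).comp x hf.hasDerivAt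
  rw [hderiv.deriv]
  exact mul_nonpos_of_nonneg_of_nonpos (by positivity) hf'

lemma deriv_eq_zero_of_forall_gt_eq {V : ℝ → ℝ} {a b : ℝ} (hV : ∀ z, a < z → V z = b)
    (ha : deriv V a = 0) {z : ℝ} (hz : a ≤ z) : deriv V z = 0 := by
  rcases hz.eq_or_lt with rfl | hz
  · exact ha
  · have hconst : V =ᶠ[nhds z] fun _ => b :=
      eventually_of_mem (isOpen_Ioi.mem_nhds hz) fun y hy => hV y hy
    rw [hconst.deriv_eq, deriv_const]

lemma flux_strictAntiOn {W U : ℝ → ℝ} {c a : ℝ} (hW : Continuous W) (hU : Continuous U)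
    (hWd : ∀ z < a, DifferentiableAt ℝ W z) (hUd : ∀ z < a, DifferentiableAt ℝ U z)
    (hode : ∀ z < a, deriv W z + c * deriv U z + U z * (1 - U z) = 0)
    (hU01 : ∀ z < a, 0 < U z ∧ U z < 1) :
    StrictAntiOn (fun z => W z + c * U z) (Iic a) := by
  refine strictAntiOn_of_deriv_neg (convex_Iic a)
    (hW.add (continuous_const.mul hU)).continuousOn fun z hz => ?_
  rw [interior_Iic] at hz
  have hflux : HasDerivAt (fun z => W z + c * U z) (deriv W z + c * deriv U z) z :=
    (hWd z hz).hasDerivAt.add ((hUd z hz).hasDerivAt.const_mul c)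
  rw [hflux.deriv]
  obtain ⟨hpos, hlt1⟩ := hU01 z hz
  nlinarith [hode z hz, mul_pos hpos (sub_pos.mpr hlt1)]

theorem travelling_wave_Um_deriv_bound_general
    (m cstar : ℝ) (U : ℝ → ℝ)
    (hm : 2 ≤ m) (hc : 0 < cstar)
    (hUcont : Continuous U)
    (hU0 : ∀ z : ℝ, 0 ≤ z → U z = 0)
    (hU01 : ∀ z : ℝ, z < 0 → 0 < U z ∧ U z < 1)
    (hUC2 : ContDiffOn ℝ 2 U (Set.Iio 0))
    (hVm : ContDiff ℝ 1 (fun z => U z ^ m))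
    (hVm0 : deriv (fun z => U z ^ m) 0 = 0)
    (hVm2 : ∀ z : ℝ, z < 0 → DifferentiableAt ℝ (deriv (fun z => U z ^ m)) z)
    (hODE : ∀ z : ℝ, z < 0 →
      deriv (deriv (fun z => U z ^ m)) z + cstar * deriv U z + U z * (1 - U z) = 0)
    (hU' : ∀ z : ℝ, z < 0 → deriv U z < 0) :
    ∃ C > (0:ℝ), ∀ z : ℝ, |deriv (fun z => U z ^ m) z| ≤ C * U z := by
  have hUd : ∀ z < 0, DifferentiableAt ℝ U z := fun z hz =>
    (hUC2.differentiableOn (by norm_num) z hz).differentiableAt (isOpen_Iio.mem_nhds hz)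
  have hflux := flux_strictAntiOn (hVm.continuous_deriv le_rfl) hUcont hVm2 hUd hODE hU01
  refine ⟨cstar, hc, fun z => ?_⟩
  rcases lt_or_ge z 0 with hz | hz
  · have hlt := hflux (mem_Iic.mpr hz.le) (mem_Iic.mpr le_rfl) hz
    have hnonpos := deriv_rpow_const_nonpos (by linarith : (0:ℝ) ≤ m) (hUd z hz) (hU01 z hz).1
      (hU' z hz).le
    simp only [hVm0, hU0 0 le_rfl, mul_zero, add_zero] at hlt
    rw [abs_of_nonpos hnonpos]
    linarith
  · rw [deriv_eq_zero_of_forall_gt_eq (fun y hy => by rw [hU0 y hy.le]) hVm0 hz,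
      hU0 z hz, abs_zero, mul_zero]

/-- `|(U^m)'(z)| ≤ C U(z)` for the sharp minimal travelling wave. -/
theorem travelling_wave_Um_deriv_bound
    (m cstar : ℝ) (U : ℝ → ℝ)
    (hm : 2 ≤ m) (hc : 0 < cstar)
    (hUcont : Continuous U)
    (hU0 : ∀ z : ℝ, 0 ≤ z → U z = 0)
    (hU01 : ∀ z : ℝ, z < 0 → 0 < U z ∧ U z < 1)
    (hUlim : Tendsto U atBot (nhds 1))
    (hUC2 : ContDiffOn ℝ 2 U (Set.Iio 0))
    (hVm : ContDiff ℝ 1 (fun z => U z ^ m))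
    (hVm0 : deriv (fun z => U z ^ m) 0 = 0)
    (hVm2 : ∀ z : ℝ, z < 0 → DifferentiableAt ℝ (deriv (fun z => U z ^ m)) z)
    (hODE : ∀ z : ℝ, z < 0 →
      deriv (deriv (fun z => U z ^ m)) z + cstar * deriv U z + U z * (1 - U z) = 0)
    (hU' : ∀ z : ℝ, z < 0 → deriv U z < 0) :
    ∃ C > (0:ℝ), ∀ z : ℝ, |deriv (fun z => U z ^ m) z| ≤ C * U z :=
  travelling_wave_Um_deriv_bound_general m cstar U hm hc hUcont hU0 hU01 hUC2 hVm hVm0 hVm2 hODE hU'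
end

section
/- Let m ≥ 2 be a real number, c* > 0, and U : ℝ → ℝ be continuous with U(z) = 0 for z ≥ 0, 0 < U(z) < 1 for z < 0, lim_{z → -∞} U(z) = 1, U twice continuously differentiable on (-∞, 0), z ↦ U(z)^m continuously differentiable on ℝ with (U^m)'(0) = 0 and twice differentiable on (-∞, 0), and (U^m)''(z) + c* U'(z) + U(z)(1 - U(z)) = 0 for all z < 0. Assume moreover U'(z) < 0 for all z < 0. Then there exist C > 0 and β > 0 such that 0 < 1 - U(z) ≤ C e^{-β|z|} for all z ≤ 0. -/
/-!
Put `V = U ^ m` and, for small `μ > 0`, `g = -V' - μ (1 - V)`. Far to the left `U ≥ 1/2`, so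
`m U^(m-1)` is bounded below and `c U'` is controlled by `-V'`, while by Bernoulli
`U (1 - U) ≥ (1 - V) / (2m)`; with the equation this gives `g' + μ g ≥ 0` wherever `g < 0`.
Since `U' < 0`, `g ≥ -μ`, and fencing `g` from below by `-K e^{μ (a - z) / 2}` on `[a, z]` and
letting `a → -∞` yields `g ≥ 0`, i.e. `(1 - V)' ≥ μ (1 - V)`. Hence `1 - U ≤ 1 - V` decays
like `e^{μ z}`.
-/

open Filter Set Real Topology

theorem nonneg_of_bddBelow_of_neg_mul_le_deriv {g g' : ℝ → ℝ} {b ν : ℝ} (hν : 0 < ν)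
    (hg : ∀ x ≤ b, HasDerivAt g (g' x) x) (hbdd : BddBelow (g '' Iic b))
    (hg' : ∀ x ≤ b, g x < 0 → -ν * g x ≤ g' x) {x : ℝ} (hx : x ≤ b) : 0 ≤ g x := by
  obtain ⟨M, hM⟩ := hbdd
  set K := |M| + 1
  have hK : 0 < K := by positivity
  -- Halving the rate `ν` makes the fencing inequality at a contact point strict.
  have hfence : ∀ a ≤ x, -K * exp (ν / 2 * (a - x)) ≤ g x := by
    intro a hax
    have hB : ∀ y, HasDerivAt (fun y => K * exp (ν / 2 * (a - y)))
        (-(ν / 2) * (K * exp (ν / 2 * (a - y)))) y := fun y =>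
      ((((hasDerivAt_id' y).const_sub a).const_mul (ν / 2)).exp.const_mul K).congr_deriv (by ring)
    have hMa := hM (mem_image_of_mem g (hax.trans hx))
    have hstart : -g a ≤ K * exp (ν / 2 * (a - a)) := by
      rw [sub_self, mul_zero, exp_zero, mul_one]
      linarith [neg_abs_le M]
    have hcontact : ∀ y ∈ Ico a x, -g y = K * exp (ν / 2 * (a - y)) →
        -g' y < -(ν / 2) * (K * exp (ν / 2 * (a - y))) := by
      intro y hy hyB
      have hpos : 0 < K * exp (ν / 2 * (a - y)) := by positivity
      nlinarith [hg' y (hy.2.le.trans hx) (by linarith)]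
    have := image_le_of_deriv_right_lt_deriv_boundary (f := fun y => -g y)
      (fun y hy => (hg y (hy.2.trans hx)).continuousAt.continuousWithinAt.neg)
      (fun y hy => (hg y (hy.2.le.trans hx)).neg.hasDerivWithinAt) hstart hB hcontact
      ⟨hax, le_rfl⟩
    linarith
  have hlim : Tendsto (fun a => -K * exp (ν / 2 * (a - x))) atBot (𝓝 0) := by
    have : Tendsto (fun a => ν / 2 * (a - x)) atBot atBot :=
      (tendsto_atBot_add_const_right _ (-x) tendsto_id).const_mul_atBot (half_pos hν)
    simpa using (tendsto_exp_atBot.comp this).const_mul (-K)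
  exact le_of_tendsto hlim ((eventually_le_atBot x).mono hfence)

theorem le_mul_exp_of_mul_le_deriv {W W' : ℝ → ℝ} {b μ : ℝ}
    (hW : ∀ x ≤ b, HasDerivAt W (W' x) x) (hle : ∀ x ≤ b, μ * W x ≤ W' x) {z : ℝ}
    (hz : z ≤ b) : W z ≤ W b * exp (μ * (z - b)) := by
  have hmono : MonotoneOn (fun x => W x * exp (-μ * x)) (Iic b) := by
    refine monotoneOn_of_hasDerivWithinAt_nonneg (convex_Iic b)
      (fun x hx => ((hW x hx).continuousAt.mul (by fun_prop)).continuousWithinAt)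
      (fun x hx => ?_) (fun x hx => ?_) (f' := fun x => (W' x - μ * W x) * exp (-μ * x))
    · rw [interior_Iic] at hx
      exact ((hW x hx.le).mul ((hasDerivAt_id' x).const_mul (-μ)).exp).hasDerivWithinAt.congr_deriv
        (by ring)
    · rw [interior_Iic] at hx
      exact mul_nonneg (sub_nonneg.2 (hle x hx.le)) (exp_pos _).le
  have := hmono hz self_mem_Iic hz
  calc W z = W z * exp (-μ * z) * exp (μ * z) := by rw [mul_assoc, ← exp_add]; simp
    _ ≤ W b * exp (-μ * b) * exp (μ * z) := by gcongr
    _ = W b * exp (μ * (z - b)) := by rw [mul_assoc, ← exp_add]; ring_nf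

theorem exists_pos_mul_add_le (A : ℝ) {κ : ℝ} (hκ : 0 < κ) :
    ∃ μ > 0, μ * (A + μ) ≤ κ := by
  have hlim : Tendsto (fun μ : ℝ => μ * (A + μ)) (𝓝[>] 0) (𝓝 0) := by
    have : Continuous (fun μ : ℝ => μ * (A + μ)) := by fun_prop
    simpa using (this.tendsto 0).mono_left nhdsWithin_le_nhds
  obtain ⟨μ, hle, hpos⟩ := ((hlim.eventually (ge_mem_nhds hκ)).and self_mem_nhdsWithin).exists
  exact ⟨μ, hpos, hle⟩

theorem one_sub_rpow_le_mul_one_sub {u m : ℝ} (hu : 0 ≤ u) (hm : 1 ≤ m) :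
    1 - u ^ m ≤ m * (1 - u) := by
  have := one_add_mul_self_le_rpow_one_add (s := u - 1) (by linarith) hm
  rw [add_sub_cancel] at this
  linarith

theorem sq_mul_one_sub_rpow_le {m c μ δ u u' : ℝ} (hm : 1 ≤ m) (hc : 0 ≤ c) (hδ : 0 < δ)
    (hδu : δ ≤ u ^ (m - 1)) (hu : 1 / 2 ≤ u) (hu1 : u ≤ 1) (hu' : u' ≤ 0)
    (hμ : μ * (c / (m * δ) + μ) ≤ 1 / (2 * m))
    (hslow : -(u' * m * u ^ (m - 1)) ≤ μ * (1 - u ^ m)) :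
    μ ^ 2 * (1 - u ^ m) ≤ c * u' + u * (1 - u) := by
  set A := c / (m * δ)
  have hA : 0 ≤ A := by positivity
  have hAmδ : A * (m * δ) = c := div_mul_cancel₀ c (by positivity)
  have hum : 0 ≤ 1 - u ^ m := by
    linarith [rpow_le_one (by linarith) hu1 (by linarith : 0 ≤ m)]
  have hadvection : -A * -(u' * m * u ^ (m - 1)) ≤ c * u' := by
    rw [← hAmδ]
    nlinarith [mul_nonneg (mul_nonneg hA (by linarith : 0 ≤ m))
      (mul_nonneg (neg_nonneg.2 hu') (sub_nonneg.2 hδu))]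
  have hreaction : 1 / (2 * m) * (1 - u ^ m) ≤ u * (1 - u) := by
    have := one_sub_rpow_le_mul_one_sub (by linarith : 0 ≤ u) hm
    rw [div_mul_eq_mul_div, div_le_iff₀ (by positivity)]
    nlinarith
  nlinarith [mul_le_mul_of_nonneg_left hslow hA, mul_le_mul_of_nonneg_right hμ hum]

theorem mul_one_sub_rpow_le_neg_deriv_of_travellingWave {m c μ z₀ : ℝ} {U : ℝ → ℝ}
    (hm : 1 ≤ m) (hc : 0 ≤ c) (hμ : 0 < μ)
    (hμc : μ * (c / (m * (1 / 2) ^ (m - 1)) + μ) ≤ 1 / (2 * m))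
    (hz₀ : z₀ < 0) (hUhalf : ∀ z ≤ z₀, 1 / 2 ≤ U z)
    (hU01 : ∀ z < 0, 0 < U z ∧ U z < 1) (hUd : ∀ z < 0, DifferentiableAt ℝ U z)
    (hU' : ∀ z < 0, deriv U z < 0)
    (hV : Differentiable ℝ (fun z => U z ^ m))
    (hV' : ∀ z < 0, DifferentiableAt ℝ (deriv (fun z => U z ^ m)) z)
    (hODE : ∀ z < 0,
      deriv (deriv (fun z => U z ^ m)) z + c * deriv U z + U z * (1 - U z) = 0) :
    ∀ z ≤ z₀, μ * (1 - U z ^ m) ≤ -deriv (fun z => U z ^ m) z := by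
  set V := fun z => U z ^ m
  have hderivV : ∀ z < 0, deriv V z = deriv U z * m * U z ^ (m - 1) := fun z hz =>
    ((hUd z hz).hasDerivAt.rpow_const (Or.inl (hU01 z hz).1.ne')).deriv
  have hderivV_nonpos : ∀ z < 0, deriv V z ≤ 0 := fun z hz => by
    rw [hderivV z hz]
    exact mul_nonpos_of_nonpos_of_nonneg
      (mul_nonpos_of_nonpos_of_nonneg (hU' z hz).le (by linarith))
      (rpow_nonneg (hU01 z hz).1.le _)
  intro z hz
  suffices 0 ≤ -deriv V z - μ * (1 - V z) by linarith
  refine nonneg_of_bddBelow_of_neg_mul_le_deriv (g := fun x => -deriv V x - μ * (1 - V x))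
    (g' := fun x => -deriv (deriv V) x + μ * deriv V x) hμ (fun x hx => ?_) ⟨-μ, ?_⟩
    (fun x hx hgx => ?_) hz
  · exact ((hV' x (hx.trans_lt hz₀)).hasDerivAt.neg.sub
      (((hV x).hasDerivAt.const_sub 1).const_mul μ)).congr_deriv (by ring)
  · rintro _ ⟨x, hx, rfl⟩
    have hx0 : x < 0 := (mem_Iic.1 hx).trans_lt hz₀
    have : 0 ≤ V x := rpow_nonneg (hU01 x hx0).1.le m
    nlinarith [hderivV_nonpos x hx0]
  · have hx0 : x < 0 := hx.trans_lt hz₀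
    have hux := hUhalf x hx
    have key := sq_mul_one_sub_rpow_le hm hc (by positivity)
      (rpow_le_rpow (by norm_num) hux (by linarith)) hux (hU01 x hx0).2.le (hU' x hx0).le hμc
      (by rw [← hderivV x hx0]; linarith)
    -- by the equation, `g' + μ g = c U' + U (1 - U) - μ² (1 - V)`
    nlinarith [hODE x hx0]

theorem one_sub_le_exp_of_mul_one_sub_rpow_le_neg_deriv {m μ z₀ : ℝ} {U : ℝ → ℝ}
    (hm : 1 ≤ m) (hz₀ : z₀ ≤ 0) (hμ : 0 ≤ μ) (hU : ∀ z ≤ 0, 0 ≤ U z ∧ U z ≤ 1)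
    (hV : Differentiable ℝ (fun z => U z ^ m))
    (hslope : ∀ z ≤ z₀, μ * (1 - U z ^ m) ≤ -deriv (fun z => U z ^ m) z) {z : ℝ}
    (hz : z ≤ 0) : 1 - U z ≤ exp (μ * (z - z₀)) := by
  rcases le_or_gt z z₀ with h | h
  · have hdecay := le_mul_exp_of_mul_le_deriv (W := fun z => 1 - U z ^ m)
      (fun x _ => (hV x).hasDerivAt.const_sub 1) hslope h
    have hUzm : U z ^ m ≤ U z := by
      simpa using rpow_le_rpow_of_exponent_ge' (hU z hz).1 (hU z hz).2 zero_le_one hm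
    have : 0 ≤ U z₀ ^ m := rpow_nonneg (hU z₀ hz₀).1 m
    calc 1 - U z ≤ (1 - U z₀ ^ m) * exp (μ * (z - z₀)) := by linarith
      _ ≤ exp (μ * (z - z₀)) := by nlinarith [exp_pos (μ * (z - z₀))]
  · calc 1 - U z ≤ 1 := by linarith [(hU z hz).1]
      _ ≤ exp (μ * (z - z₀)) := one_le_exp (by nlinarith)

theorem travelling_wave_exponential_convergence_general
    (m cstar : ℝ) (U : ℝ → ℝ)
    (hm : 2 ≤ m) (hc : 0 < cstar)
    (hU0 : ∀ z : ℝ, 0 ≤ z → U z = 0)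
    (hU01 : ∀ z : ℝ, z < 0 → 0 < U z ∧ U z < 1)
    (hUlim : Tendsto U atBot (nhds 1))
    (hUC2 : ContDiffOn ℝ 2 U (Set.Iio 0))
    (hVm : ContDiff ℝ 1 (fun z => U z ^ m))
    (hVm2 : ∀ z : ℝ, z < 0 → DifferentiableAt ℝ (deriv (fun z => U z ^ m)) z)
    (hODE : ∀ z : ℝ, z < 0 →
      deriv (deriv (fun z => U z ^ m)) z + cstar * deriv U z + U z * (1 - U z) = 0)
    (hU' : ∀ z : ℝ, z < 0 → deriv U z < 0) :
    ∃ C > (0:ℝ), ∃ β > (0:ℝ), ∀ z : ℝ, z ≤ 0 →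
      0 < 1 - U z ∧ 1 - U z ≤ C * Real.exp (-β * |z|) := by
  have hm1 : 1 ≤ m := by linarith
  have hV := hVm.differentiable one_ne_zero
  have hU : ∀ z ≤ 0, 0 ≤ U z ∧ U z < 1 := fun z hz => by
    rcases hz.lt_or_eq with h | rfl
    · exact ⟨(hU01 z h).1.le, (hU01 z h).2⟩
    · simp [hU0]
  obtain ⟨a, ha⟩ :=
    eventually_atBot.1 (hUlim.eventually (le_mem_nhds (by norm_num : (1 : ℝ) / 2 < 1)))
  obtain ⟨z₀, hz₀, hUhalf⟩ : ∃ z₀ < 0, ∀ z ≤ z₀, 1 / 2 ≤ U z :=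
    ⟨min a (-1), (min_le_right _ _).trans_lt (by norm_num),
      fun z hz => ha z (hz.trans (min_le_left _ _))⟩
  obtain ⟨μ, hμ, hμc⟩ :=
    exists_pos_mul_add_le (cstar / (m * (1 / 2) ^ (m - 1))) (by positivity : 0 < 1 / (2 * m))
  have hslope := mul_one_sub_rpow_le_neg_deriv_of_travellingWave hm1 hc.le hμ hμc hz₀ hUhalf
    hU01 (fun z hz => (hUC2.differentiableOn (by norm_num) z hz).differentiableAt (Iio_mem_nhds hz))
    hU' hV hVm2 hODE
  refine ⟨exp (-(μ * z₀)), exp_pos _, μ, hμ,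
    fun z hz => ⟨by linarith [(hU z hz).2], ?_⟩⟩
  rw [abs_of_nonpos hz, neg_mul_neg, ← exp_add, neg_add_eq_sub, ← mul_sub]
  exact one_sub_le_exp_of_mul_one_sub_rpow_le_neg_deriv hm1 hz₀.le hμ.le
    (fun z hz => (hU z hz).imp_right le_of_lt) hV hslope hz

/-- `0 < 1 - U(z) ≤ C e^{-β|z|}` for `z ≤ 0` for the sharp minimal
travelling wave. -/
theorem travelling_wave_exponential_convergence
    (m cstar : ℝ) (U : ℝ → ℝ)
    (hm : 2 ≤ m) (hc : 0 < cstar)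
    (hUcont : Continuous U)
    (hU0 : ∀ z : ℝ, 0 ≤ z → U z = 0)
    (hU01 : ∀ z : ℝ, z < 0 → 0 < U z ∧ U z < 1)
    (hUlim : Tendsto U atBot (nhds 1))
    (hUC2 : ContDiffOn ℝ 2 U (Set.Iio 0))
    (hVm : ContDiff ℝ 1 (fun z => U z ^ m))
    (hVm0 : deriv (fun z => U z ^ m) 0 = 0)
    (hVm2 : ∀ z : ℝ, z < 0 → DifferentiableAt ℝ (deriv (fun z => U z ^ m)) z)
    (hODE : ∀ z : ℝ, z < 0 →
      deriv (deriv (fun z => U z ^ m)) z + cstar * deriv U z + U z * (1 - U z) = 0)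
    (hU' : ∀ z : ℝ, z < 0 → deriv U z < 0) :
    ∃ C > (0:ℝ), ∃ β > (0:ℝ), ∀ z : ℝ, z ≤ 0 →
      0 < 1 - U z ∧ 1 - U z ≤ C * Real.exp (-β * |z|) :=
  travelling_wave_exponential_convergence_general m cstar U hm hc hU0 hU01 hUlim hUC2 hVm hVm2 hODE
    hU'
end

section
/- Let m ≥ 2 be a real number, c* > 0, and U : ℝ → ℝ be continuous with U(z) = 0 for z ≥ 0, 0 < U(z) < 1 for z < 0, lim_{z → -∞} U(z) = 1, U twice continuously differentiable on (-∞, 0), z ↦ U(z)^m continuously differentiable on ℝ with (U^m)'(0) = 0 and twice differentiable on (-∞, 0), and (U^m)''(z) + c* U'(z) + U(z)(1 - U(z)) = 0 for all z < 0. Assume moreover U'(z) < 0 for all z < 0. Then there exists C > 0 such that |z · U'(z)| ≤ C · U(z) for all z ≤ -1. -/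
/-!
Put `b = c* + 1` and `h = -(U^m)' + b (1 - U)`. The wave equation gives `h' = -U' + U (1 - U)`,
and on a half-line `(-∞, a]` where `U ≥ 1/2` this dominates `α h` for a small `α > 0`. Hence
`h ≤ K e^{α z}` there, and since `h ≥ -(U^m)' ≥ m 2^{1-m} (-U')`, also `-U' ≤ K' e^{α z}`, so that
`|z U'|` stays bounded while `U ≥ 1/2`. On the compact interval `[a, -1]` the bound follows from
continuity and positivity of `U`.
-/

open Filter Set Real

theorem le_mul_exp_of_mul_le_deriv_s15 {f f' : ℝ → ℝ} {α a : ℝ}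
    (hf : ∀ z ≤ a, HasDerivAt f (f' z) z) (hle : ∀ z ≤ a, α * f z ≤ f' z) {z : ℝ} (hz : z ≤ a) :
    f z ≤ f a * exp (α * (z - a)) := by
  set φ : ℝ → ℝ := fun x => f x * exp (α * (a - x))
  have hφ : ∀ x ≤ a, HasDerivAt φ ((f' x - α * f x) * exp (α * (a - x))) x := by
    intro x hx
    refine ((hf x hx).mul (((hasDerivAt_id x).const_sub a).const_mul α).exp).congr_deriv ?_
    simp only [id]
    ring
  have hmono : MonotoneOn φ (Iic a) := by
    refine monotoneOn_of_hasDerivWithinAt_nonneg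
      (f' := fun x => (f' x - α * f x) * exp (α * (a - x))) (convex_Iic a)
      (fun x hx => (hφ x hx).continuousAt.continuousWithinAt) ?_ ?_
    · rw [interior_Iic]
      exact fun x hx => (hφ x hx.le).hasDerivWithinAt
    · rw [interior_Iic]
      exact fun x hx => mul_nonneg (sub_nonneg.2 (hle x hx.le)) (exp_pos _).le
  have hφz : φ z ≤ f a := by simpa [φ] using hmono hz self_mem_Iic hz
  calc f z = φ z * exp (α * (z - a)) := by
          simp only [φ, mul_assoc, ← exp_add]
          ring_nf
          simp
    _ ≤ f a * exp (α * (z - a)) := mul_le_mul_of_nonneg_right hφz (exp_pos _).le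

theorem neg_mul_mul_exp_le_one_div {α : ℝ} (hα : 0 < α) (z : ℝ) :
    -z * exp (α * z) ≤ 1 / α := by
  rw [le_div_iff₀ hα]
  calc -z * exp (α * z) * α = -(α * z) * exp (α * z) := by ring
    _ ≤ exp (-(α * z)) * exp (α * z) :=
        mul_le_mul_of_nonneg_right (by linarith [add_one_le_exp (-(α * z))]) (exp_pos _).le
    _ = 1 := by rw [← exp_add]; simp

theorem IsCompact.exists_abs_le_mul {X : Type*} [TopologicalSpace X] {K : Set X}
    (hK : IsCompact K) {g u : X → ℝ} (hg : ContinuousOn g K) (hu : ContinuousOn u K)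
    (hpos : ∀ x ∈ K, 0 < u x) : ∃ C, ∀ x ∈ K, |g x| ≤ C * u x := by
  obtain ⟨C, hC⟩ := hK.exists_bound_of_continuousOn (hg.div hu fun x hx => (hpos x hx).ne')
  refine ⟨C, fun x hx => ?_⟩
  have hx' := hC x hx
  rwa [Pi.div_apply, Real.norm_eq_abs, abs_div, abs_of_pos (hpos x hx),
    div_le_iff₀ (hpos x hx)] at hx'

section TravellingWave

variable {m c : ℝ} {U : ℝ → ℝ}

theorem hasDerivAt_lyapunov {V : ℝ → ℝ} {z : ℝ} (hU : HasDerivAt U (deriv U z) z)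
    (hV : DifferentiableAt ℝ (deriv V) z)
    (hODE : deriv (deriv V) z + c * deriv U z + U z * (1 - U z) = 0) :
    HasDerivAt (fun z => -deriv V z + (c + 1) * (1 - U z)) (-deriv U z + U z * (1 - U z)) z :=
  (hV.hasDerivAt.neg.add ((hU.const_sub 1).const_mul (c + 1))).congr_deriv (by linarith)

theorem mul_lyapunov_le_of_half_le {α b u u' : ℝ} (hm : 1 ≤ m) (hαm : α * m ≤ 1)
    (hαb : α * b ≤ 1 / 2) (hu : 1 / 2 ≤ u) (hu1 : u ≤ 1) (hu' : u' ≤ 0) :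
    α * (-(u' * m * u ^ (m - 1)) + b * (1 - u)) ≤ -u' + u * (1 - u) := by
  have hpow : u ^ (m - 1) ≤ 1 := rpow_le_one (by linarith) hu1 (by linarith)
  have hflux : α * (-(u' * m * u ^ (m - 1))) ≤ -u' :=
    calc α * (-(u' * m * u ^ (m - 1))) = α * m * (-u' * u ^ (m - 1)) := by ring
      _ ≤ 1 * (-u' * 1) := mul_le_mul hαm (mul_le_mul_of_nonneg_left hpow (by linarith))
          (mul_nonneg (by linarith) (rpow_nonneg (by linarith) _)) zero_le_one
      _ = -u' := by ring
  have hreact : α * (b * (1 - u)) ≤ u * (1 - u) :=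
    calc α * (b * (1 - u)) = α * b * (1 - u) := by ring
      _ ≤ 1 / 2 * (1 - u) := by gcongr
      _ ≤ u * (1 - u) := by gcongr
  linarith

theorem exists_neg_deriv_le_exp (hm : 1 ≤ m) (hc : -1 < c) {a : ℝ}
    (hhalf : ∀ z ≤ a, 1 / 2 ≤ U z) (hU1 : ∀ z ≤ a, U z ≤ 1)
    (hU : ∀ z ≤ a, HasDerivAt U (deriv U z) z) (hU' : ∀ z ≤ a, deriv U z ≤ 0)
    (hV : ∀ z ≤ a, DifferentiableAt ℝ (deriv (fun z => U z ^ m)) z)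
    (hODE : ∀ z ≤ a,
      deriv (deriv (fun z => U z ^ m)) z + c * deriv U z + U z * (1 - U z) = 0) :
    ∃ α > (0 : ℝ), ∃ K ≥ (0 : ℝ), ∀ z ≤ a, -deriv U z ≤ K * exp (α * z) := by
  have hm0 : 0 < m := by linarith
  set α := min (1 / m) (1 / (2 * (c + 1)))
  have hα : 0 < α := lt_min (by positivity) (one_div_pos.2 (by linarith))
  have hαm : α * m ≤ 1 := (le_div_iff₀ hm0).1 (min_le_left _ _)
  have hαb : α * (c + 1) ≤ 1 / 2 := by
    have : α * (2 * (c + 1)) ≤ 1 := (le_div_iff₀ (by linarith)).1 (min_le_right _ _)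
    linarith
  have hVU : ∀ z ≤ a, deriv (fun z => U z ^ m) z = deriv U z * m * U z ^ (m - 1) :=
    fun z hz => ((hU z hz).rpow_const (Or.inl (by linarith [hhalf z hz]))).deriv
  set h := fun z => -deriv (fun z => U z ^ m) z + (c + 1) * (1 - U z)
  have hgronwall : ∀ z ≤ a, h z ≤ h a * exp (α * (z - a)) := fun z hz =>
    le_mul_exp_of_mul_le_deriv_s15 (fun x hx => hasDerivAt_lyapunov (hU x hx) (hV x hx) (hODE x hx))
      (fun x hx => by
        simp only [hVU x hx]
        exact mul_lyapunov_le_of_half_le hm hαm hαb (hhalf x hx) (hU1 x hx) (hU' x hx)) hz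
  have hflux : ∀ z ≤ a, m * (1 / 2) ^ (m - 1) * -deriv U z ≤ h z := by
    intro z hz
    have hpow : (1 / 2 : ℝ) ^ (m - 1) ≤ U z ^ (m - 1) :=
      rpow_le_rpow (by norm_num) (hhalf z hz) (by linarith)
    have hmU' : 0 ≤ m * -deriv U z := mul_nonneg (by linarith) (by linarith [hU' z hz])
    simp only [h, hVU z hz]
    nlinarith [hU1 z hz]
  have hc0 : 0 < m * (1 / 2 : ℝ) ^ (m - 1) := by positivity
  refine ⟨α, hα, h a * exp (-(α * a)) / (m * (1 / 2) ^ (m - 1)), ?_, fun z hz => ?_⟩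
  · have ha : 0 ≤ h a := (hflux a le_rfl).trans' (mul_nonneg hc0.le (by linarith [hU' a le_rfl]))
    positivity
  · rw [div_mul_eq_mul_div, le_div_iff₀ hc0, mul_assoc, ← exp_add]
    calc -deriv U z * (m * (1 / 2) ^ (m - 1)) ≤ h z := by linarith [hflux z hz]
      _ ≤ h a * exp (α * (z - a)) := hgronwall z hz
      _ = h a * exp (-(α * a) + α * z) := by ring_nf

theorem exists_abs_mul_deriv_le_of_tendsto (hm : 1 ≤ m) (hc : -1 < c)
    (hUlim : Tendsto U atBot (nhds 1)) (hU1 : ∀ z < 0, U z ≤ 1)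
    (hU : ∀ z < 0, HasDerivAt U (deriv U z) z) (hU' : ∀ z < 0, deriv U z ≤ 0)
    (hV : ∀ z < 0, DifferentiableAt ℝ (deriv (fun z => U z ^ m)) z)
    (hODE : ∀ z < 0,
      deriv (deriv (fun z => U z ^ m)) z + c * deriv U z + U z * (1 - U z) = 0) :
    ∃ a C, ∀ z ≤ a, |z * deriv U z| ≤ C * U z := by
  obtain ⟨a₀, ha₀⟩ :=
    eventually_atBot.1 (hUlim.eventually (eventually_gt_nhds (by norm_num : (1 / 2 : ℝ) < 1)))
  set a := min a₀ (-1)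
  have hneg : ∀ z ≤ a, z < 0 := fun z hz => hz.trans_lt ((min_le_right _ _).trans_lt (by norm_num))
  have hhalf : ∀ z ≤ a, 1 / 2 ≤ U z := fun z hz => (ha₀ z (hz.trans (min_le_left _ _))).le
  obtain ⟨α, hα, K, hK, hdecay⟩ := exists_neg_deriv_le_exp hm hc hhalf
    (fun z hz => hU1 z (hneg z hz)) (fun z hz => hU z (hneg z hz))
    (fun z hz => hU' z (hneg z hz)) (fun z hz => hV z (hneg z hz)) (fun z hz => hODE z (hneg z hz))
  refine ⟨a, 2 * (K / α), fun z hz => ?_⟩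
  have hz0 := hneg z hz
  calc |z * deriv U z| = -z * -deriv U z := by
        rw [abs_of_nonneg (mul_nonneg_of_nonpos_of_nonpos hz0.le (hU' z hz0))]; ring
    _ ≤ -z * (K * exp (α * z)) := mul_le_mul_of_nonneg_left (hdecay z hz) (by linarith)
    _ = K * (-z * exp (α * z)) := by ring
    _ ≤ K * (1 / α) := mul_le_mul_of_nonneg_left (neg_mul_mul_exp_le_one_div hα z) hK
    _ ≤ 2 * (K / α) * U z := by
        have := hhalf z hz
        rw [mul_one_div]
        nlinarith [div_nonneg hK hα.le]

end TravellingWave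

theorem travelling_wave_zU_deriv_bound_general
    (m cstar : ℝ) (U : ℝ → ℝ)
    (hm : 2 ≤ m) (hc : 0 < cstar)
    (hU01 : ∀ z : ℝ, z < 0 → 0 < U z ∧ U z < 1)
    (hUlim : Tendsto U atBot (nhds 1))
    (hUC2 : ContDiffOn ℝ 2 U (Set.Iio 0))
    (hVm2 : ∀ z : ℝ, z < 0 → DifferentiableAt ℝ (deriv (fun z => U z ^ m)) z)
    (hODE : ∀ z : ℝ, z < 0 →
      deriv (deriv (fun z => U z ^ m)) z + cstar * deriv U z + U z * (1 - U z) = 0)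
    (hU' : ∀ z : ℝ, z < 0 → deriv U z < 0) :
    ∃ C > (0:ℝ), ∀ z : ℝ, z ≤ -1 → |z * deriv U z| ≤ C * U z := by
  have hU : ∀ z < 0, HasDerivAt U (deriv U z) z := fun z hz =>
    ((hUC2.differentiableOn (by norm_num) z hz).differentiableAt (Iio_mem_nhds hz)).hasDerivAt
  obtain ⟨a, C₁, hfar⟩ := exists_abs_mul_deriv_le_of_tendsto (by linarith) (by linarith) hUlim
    (fun z hz => (hU01 z hz).2.le) hU (fun z hz => (hU' z hz).le) hVm2 hODE
  have hsub : Icc a (-1) ⊆ Iio 0 := fun z hz => hz.2.trans_lt (by norm_num)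
  obtain ⟨C₂, hnear⟩ := isCompact_Icc.exists_abs_le_mul (g := fun z => z * deriv U z)
    (continuousOn_id.mul ((hUC2.continuousOn_deriv_of_isOpen isOpen_Iio (by norm_num)).mono hsub))
    (hUC2.continuousOn.mono hsub) (fun z hz => (hU01 z (hsub hz)).1)
  refine ⟨max (max C₁ C₂) 1, lt_max_of_lt_right one_pos, fun z hz => ?_⟩
  have hUz := (hU01 z (hz.trans_lt (by norm_num))).1
  rcases le_total z a with hza | haz
  · exact (hfar z hza).trans (by gcongr; exact (le_max_left _ _).trans (le_max_left _ _))
  · exact (hnear z ⟨haz, hz⟩).trans (by gcongr; exact (le_max_right _ _).trans (le_max_left _ _))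

/-- `|z U'(z)| ≤ C U(z)` for `z ≤ -1` for the sharp minimal
travelling wave. -/
theorem travelling_wave_zU_deriv_bound
    (m cstar : ℝ) (U : ℝ → ℝ)
    (hm : 2 ≤ m) (hc : 0 < cstar)
    (hUcont : Continuous U)
    (hU0 : ∀ z : ℝ, 0 ≤ z → U z = 0)
    (hU01 : ∀ z : ℝ, z < 0 → 0 < U z ∧ U z < 1)
    (hUlim : Tendsto U atBot (nhds 1))
    (hUC2 : ContDiffOn ℝ 2 U (Set.Iio 0))
    (hVm : ContDiff ℝ 1 (fun z => U z ^ m))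
    (hVm0 : deriv (fun z => U z ^ m) 0 = 0)
    (hVm2 : ∀ z : ℝ, z < 0 → DifferentiableAt ℝ (deriv (fun z => U z ^ m)) z)
    (hODE : ∀ z : ℝ, z < 0 →
      deriv (deriv (fun z => U z ^ m)) z + cstar * deriv U z + U z * (1 - U z) = 0)
    (hU' : ∀ z : ℝ, z < 0 → deriv U z < 0) :
    ∃ C > (0:ℝ), ∀ z : ℝ, z ≤ -1 → |z * deriv U z| ≤ C * U z :=
  travelling_wave_zU_deriv_bound_general m cstar U hm hc hU01 hUlim hUC2 hVm2 hODE hU'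
end

section
/- Let m > 1 be a real number, c* > 0, and U : ℝ → ℝ be continuous with U(z) = 0 for z ≥ 0, 0 < U(z) < 1 for z < 0, lim_{z → -∞} U(z) = 1, U twice continuously differentiable on (-∞, 0), z ↦ U(z)^m continuously differentiable on ℝ with (U^m)'(0) = 0 and twice differentiable on (-∞, 0), (U^m)''(z) + c* U'(z) + U(z)(1 - U(z)) = 0 for all z < 0, and U'(z) < 0 for all z < 0. Consider the left difference quotient U(z)/z as z → 0⁻. Then: if 1 < m < 2, lim_{z → 0⁻} U(z)/z = 0; if m = 2, the limit lim_{z → 0⁻} U(z)/z exists and belongs to (-∞, 0); and if m > 2, lim_{z → 0⁻} U(z)/z = -∞. -/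
open Filter Set Topology

/-!
The flux `F = (U^m)' + c U` vanishes at `0` and has derivative `-U (1 - U)`, which on `[z, 0]`
lies between `-U z` and `0` because `U` is decreasing; hence `0 ≤ F z ≤ -z U z`. Since
`F / U = m / (m - 1) (U^(m-1))' + c`, integrating over `[z, 0]` gives
`(m-1)/m (-z) (c + z/2) ≤ U(z)^(m-1) ≤ (m-1)/m c (-z)`, i.e. `U(z)^(m-1) ~ (m-1)/m c |z|`.
So `U(z)/z` is `-|z|^(1/(m-1) - 1)` times a positive factor with a positive limit, and the
exponent is positive, zero or negative according as `m < 2`, `m = 2` or `m > 2`.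
-/

theorem sub_le_sub_of_hasDerivAt_le {f g f' g' : ℝ → ℝ} {a b : ℝ} (hab : a ≤ b)
    (hf : ContinuousOn f (Icc a b)) (hg : ContinuousOn g (Icc a b))
    (hf' : ∀ x ∈ Ioo a b, HasDerivAt f (f' x) x) (hg' : ∀ x ∈ Ioo a b, HasDerivAt g (g' x) x)
    (hle : ∀ x ∈ Ioo a b, f' x ≤ g' x) : f b - f a ≤ g b - g a := by
  have hmono : MonotoneOn (fun x => g x - f x) (Icc a b) := by
    refine monotoneOn_of_hasDerivWithinAt_nonneg (f' := g' - f') (convex_Icc a b) (hg.sub hf)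
      ?_ ?_ <;> rw [interior_Icc]
    · exact fun x hx => ((hg' x hx).sub (hf' x hx)).hasDerivWithinAt
    · exact fun x hx => sub_nonneg.2 (hle x hx)
  have := hmono (left_mem_Icc.2 hab) (right_mem_Icc.2 hab) hab
  linarith

section RpowAsymptotics

variable {f : ℝ → ℝ} {p L : ℝ}

theorem div_eq_neg_rpow_div_rpow_mul_rpow {y z : ℝ} (hy : 0 ≤ y) (hz : z < 0) (hp : p ≠ 0) :
    y / z = -((y ^ p / -z) ^ p⁻¹ * (-z) ^ (p⁻¹ - 1)) := by
  have hz' : 0 < -z := neg_pos.2 hz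
  rw [Real.div_rpow (Real.rpow_nonneg hy p) hz'.le, Real.rpow_rpow_inv hy hp,
    Real.rpow_sub_one hz'.ne', div_mul_div_cancel₀ (Real.rpow_pos_of_pos hz' _).ne', div_neg,
    neg_neg]

theorem div_eventuallyEq_neg_rpow_div_rpow_mul_rpow (hp : p ≠ 0)
    (hf : ∀ᶠ z in 𝓝[<] 0, 0 ≤ f z) :
    (fun z => f z / z) =ᶠ[𝓝[<] 0] fun z => -((f z ^ p / -z) ^ p⁻¹ * (-z) ^ (p⁻¹ - 1)) := by
  filter_upwards [hf, self_mem_nhdsWithin] with z hfz hz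
  exact div_eq_neg_rpow_div_rpow_mul_rpow hfz hz hp

theorem tendsto_neg_nhdsLT_zero : Tendsto (fun z : ℝ => -z) (𝓝[<] 0) (𝓝[>] 0) := by
  simpa using tendsto_neg_nhdsLT (a := (0 : ℝ))

theorem tendsto_div_nhdsLT_zero_of_lt_one (hp : 0 < p) (hp1 : p < 1)
    (hf : ∀ᶠ z in 𝓝[<] 0, 0 ≤ f z) (hlim : Tendsto (fun z => f z ^ p / -z) (𝓝[<] 0) (𝓝 L)) :
    Tendsto (fun z => f z / z) (𝓝[<] 0) (𝓝 0) := by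
  have hs : 0 < p⁻¹ - 1 := sub_pos.2 (one_lt_inv₀ hp |>.2 hp1)
  have hpow : Tendsto (fun x : ℝ => x ^ (p⁻¹ - 1)) (𝓝[>] 0) (𝓝 0) := by
    simpa [Real.zero_rpow hs.ne'] using
      (Real.continuousAt_rpow_const 0 _ (Or.inr hs.le)).tendsto.mono_left nhdsWithin_le_nhds
  have := ((hlim.rpow_const (Or.inr (inv_nonneg.2 hp.le))).mul
    (hpow.comp tendsto_neg_nhdsLT_zero)).neg
  rw [mul_zero, neg_zero] at this
  exact this.congr' (div_eventuallyEq_neg_rpow_div_rpow_mul_rpow hp.ne' hf).symm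

theorem tendsto_div_nhdsLT_zero_atBot_of_one_lt (hp : 1 < p) (hL : 0 < L)
    (hf : ∀ᶠ z in 𝓝[<] 0, 0 ≤ f z) (hlim : Tendsto (fun z => f z ^ p / -z) (𝓝[<] 0) (𝓝 L)) :
    Tendsto (fun z => f z / z) (𝓝[<] 0) atBot := by
  have hs : p⁻¹ - 1 < 0 := sub_neg.2 (inv_lt_one_of_one_lt₀ hp)
  have := tendsto_neg_atTop_atBot.comp <|
    (hlim.rpow_const (p := p⁻¹) (Or.inl hL.ne')).pos_mul_atTop (Real.rpow_pos_of_pos hL _)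
      ((tendsto_rpow_neg_nhdsGT_zero hs).comp tendsto_neg_nhdsLT_zero)
  exact this.congr' (div_eventuallyEq_neg_rpow_div_rpow_mul_rpow (zero_lt_one.trans hp).ne' hf).symm

end RpowAsymptotics

structure IsSharpWaveProfile (m c : ℝ) (U : ℝ → ℝ) : Prop where
  continuous : Continuous U
  map_zero : U 0 = 0
  pos_lt_one : ∀ z < 0, 0 < U z ∧ U z < 1
  differentiableAt : ∀ z < 0, DifferentiableAt ℝ U z
  deriv_neg : ∀ z < 0, deriv U z < 0
  contDiff_rpow : ContDiff ℝ 1 fun z => U z ^ m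
  deriv_rpow_zero : deriv (fun z => U z ^ m) 0 = 0
  differentiableAt_deriv_rpow : ∀ z < 0, DifferentiableAt ℝ (deriv fun z => U z ^ m) z
  ode : ∀ z < 0, deriv (deriv fun z => U z ^ m) z + c * deriv U z + U z * (1 - U z) = 0

noncomputable def waveFlux (m c : ℝ) (U : ℝ → ℝ) (z : ℝ) : ℝ :=
  deriv (fun z => U z ^ m) z + c * U z

namespace IsSharpWaveProfile

variable {m c : ℝ} {U : ℝ → ℝ}

theorem antitoneOn (hU : IsSharpWaveProfile m c U) : AntitoneOn U (Iic 0) := by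
  refine antitoneOn_of_deriv_nonpos (convex_Iic 0) hU.continuous.continuousOn ?_ ?_ <;>
    rw [interior_Iic]
  · exact fun z hz => (hU.differentiableAt z hz).differentiableWithinAt
  · exact fun z hz => (hU.deriv_neg z hz).le

theorem continuous_waveFlux (hU : IsSharpWaveProfile m c U) : Continuous (waveFlux m c U) :=
  (hU.contDiff_rpow.continuous_deriv le_rfl).add (continuous_const.mul hU.continuous)

theorem waveFlux_zero (hU : IsSharpWaveProfile m c U) : waveFlux m c U 0 = 0 := by
  simp [waveFlux, hU.deriv_rpow_zero, hU.map_zero]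

theorem hasDerivAt_waveFlux (hU : IsSharpWaveProfile m c U) {z : ℝ} (hz : z < 0) :
    HasDerivAt (waveFlux m c U) (-(U z * (1 - U z))) z :=
  ((hU.differentiableAt_deriv_rpow z hz).hasDerivAt.add
    ((hU.differentiableAt z hz).hasDerivAt.const_mul c)).congr_deriv (by linarith [hU.ode z hz])

theorem waveFlux_nonneg (hU : IsSharpWaveProfile m c U) {z : ℝ} (hz : z < 0) :
    0 ≤ waveFlux m c U z := by
  have := sub_le_sub_of_hasDerivAt_le hz.le hU.continuous_waveFlux.continuousOn
    continuousOn_const (fun t ht => hU.hasDerivAt_waveFlux ht.2)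
    (fun t _ => hasDerivAt_const t (0 : ℝ)) fun t ht => by
      have := hU.pos_lt_one t ht.2
      nlinarith
  linarith [hU.waveFlux_zero]

theorem waveFlux_le (hU : IsSharpWaveProfile m c U) {z : ℝ} (hz : z < 0) :
    waveFlux m c U z ≤ -z * U z := by
  have := sub_le_sub_of_hasDerivAt_le (f := fun t => t * -U z) hz.le (by fun_prop)
    hU.continuous_waveFlux.continuousOn (fun t _ => hasDerivAt_mul_const (-U z))
    (fun t ht => hU.hasDerivAt_waveFlux ht.2) fun t ht => by
      have hUt := hU.pos_lt_one t ht.2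
      have hUle : U t ≤ U z := hU.antitoneOn hz.le ht.2.le ht.1.le
      nlinarith
  linarith [hU.waveFlux_zero]

theorem hasDerivAt_rpow_sub_one (hU : IsSharpWaveProfile m c U) (hm : m ≠ 0) {z : ℝ}
    (hz : z < 0) :
    HasDerivAt (fun t => U t ^ (m - 1)) ((m - 1) / m * (waveFlux m c U z / U z - c)) z := by
  have hUz := (hU.pos_lt_one z hz).1
  have hderiv : deriv (fun t => U t ^ m) z = deriv U z * m * U z ^ (m - 1) :=
    ((hU.differentiableAt z hz).hasDerivAt.rpow_const (Or.inl hUz.ne')).deriv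
  convert (hU.differentiableAt z hz).hasDerivAt.rpow_const (p := m - 1) (Or.inl hUz.ne') using 1
  rw [waveFlux, hderiv, Real.rpow_sub_one hUz.ne' (m - 1)]
  field_simp
  ring

theorem rpow_sub_one_le (hU : IsSharpWaveProfile m c U) (hm : 1 < m) {z : ℝ} (hz : z < 0) :
    U z ^ (m - 1) ≤ (m - 1) / m * c * -z := by
  have hcoef : 0 ≤ (m - 1) / m := div_nonneg (by linarith) (by linarith)
  have := sub_le_sub_of_hasDerivAt_le (f := fun t => t * -((m - 1) / m * c)) hz.le
    (by fun_prop) (hU.continuous.rpow_const fun _ => Or.inr (by linarith)).continuousOn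
    (fun t _ => hasDerivAt_mul_const (-((m - 1) / m * c)))
    (fun t ht => hU.hasDerivAt_rpow_sub_one (by linarith) ht.2) fun t ht => by
      have := div_nonneg (hU.waveFlux_nonneg ht.2) (hU.pos_lt_one t ht.2).1.le
      nlinarith
  simp only [hU.map_zero, Real.zero_rpow (sub_ne_zero.2 hm.ne')] at this
  linarith

theorem le_rpow_sub_one (hU : IsSharpWaveProfile m c U) (hm : 1 < m) {z : ℝ} (hz : z < 0) :
    (m - 1) / m * (-z * (c + z / 2)) ≤ U z ^ (m - 1) := by
  have hcoef : 0 ≤ (m - 1) / m := div_nonneg (by linarith) (by linarith)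
  have hquad : ∀ t, HasDerivAt (fun t => -((m - 1) / m) * (c * t + t ^ 2 / 2))
      (-((m - 1) / m) * (c + t)) t := fun t =>
    ((((hasDerivAt_id' t).const_mul c).add ((hasDerivAt_pow 2 t).div_const 2)).const_mul
      (-((m - 1) / m))).congr_deriv (by norm_num)
  have := sub_le_sub_of_hasDerivAt_le hz.le
    (hU.continuous.rpow_const fun _ => Or.inr (by linarith)).continuousOn
    (by fun_prop) (fun t ht => hU.hasDerivAt_rpow_sub_one (by linarith) ht.2)
    (fun t _ => hquad t) fun t ht => by
      have hUt := (hU.pos_lt_one t ht.2).1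
      have : waveFlux m c U t / U t ≤ -t := by
        rw [div_le_iff₀ hUt]
        exact hU.waveFlux_le ht.2
      nlinarith
  simp only [hU.map_zero, Real.zero_rpow (sub_ne_zero.2 hm.ne')] at this
  nlinarith

theorem tendsto_rpow_sub_one_div (hU : IsSharpWaveProfile m c U) (hm : 1 < m) :
    Tendsto (fun z => U z ^ (m - 1) / -z) (𝓝[<] 0) (𝓝 ((m - 1) / m * c)) := by
  have hlower : Tendsto (fun z : ℝ => (m - 1) / m * (c + z / 2)) (𝓝[<] 0)
      (𝓝 ((m - 1) / m * c)) := by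
    refine tendsto_nhdsWithin_of_tendsto_nhds ?_
    simpa using ((continuous_const.add (continuous_id.div_const 2)).const_mul
      ((m - 1) / m)).tendsto (0 : ℝ)
  refine tendsto_of_tendsto_of_tendsto_of_le_of_le' hlower tendsto_const_nhds ?_ ?_ <;>
    filter_upwards [self_mem_nhdsWithin] with z (hz : z < 0)
  · rw [le_div_iff₀ (neg_pos.2 hz)]
    linarith [hU.le_rpow_sub_one hm hz]
  · rw [div_le_iff₀ (neg_pos.2 hz)]
    exact hU.rpow_sub_one_le hm hz

end IsSharpWaveProfile

theorem travelling_wave_left_derivative_trichotomy_general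
    (m cstar : ℝ) (U : ℝ → ℝ)
    (hm : 1 < m) (hc : 0 < cstar)
    (hUcont : Continuous U)
    (hU0 : ∀ z : ℝ, 0 ≤ z → U z = 0)
    (hU01 : ∀ z : ℝ, z < 0 → 0 < U z ∧ U z < 1)
    (hUC2 : ContDiffOn ℝ 2 U (Set.Iio 0))
    (hVm : ContDiff ℝ 1 (fun z => U z ^ m))
    (hVm0 : deriv (fun z => U z ^ m) 0 = 0)
    (hVm2 : ∀ z : ℝ, z < 0 → DifferentiableAt ℝ (deriv (fun z => U z ^ m)) z)
    (hODE : ∀ z : ℝ, z < 0 →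
      deriv (deriv (fun z => U z ^ m)) z + cstar * deriv U z + U z * (1 - U z) = 0)
    (hU' : ∀ z : ℝ, z < 0 → deriv U z < 0) :
    ((1 < m ∧ m < 2) →
      Tendsto (fun z : ℝ => U z / z) (nhdsWithin 0 (Set.Iio 0)) (nhds 0)) ∧
    (m = 2 →
      ∃ l : ℝ, l < 0 ∧
        Tendsto (fun z : ℝ => U z / z) (nhdsWithin 0 (Set.Iio 0)) (nhds l)) ∧
    (2 < m →
      Tendsto (fun z : ℝ => U z / z) (nhdsWithin 0 (Set.Iio 0)) atBot) := by
  have hW : IsSharpWaveProfile m cstar U :=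
    { continuous := hUcont
      map_zero := hU0 0 le_rfl
      pos_lt_one := hU01
      differentiableAt := fun z hz =>
        (hUC2.differentiableOn (by norm_num)).differentiableAt (Iio_mem_nhds hz)
      deriv_neg := hU'
      contDiff_rpow := hVm
      deriv_rpow_zero := hVm0
      differentiableAt_deriv_rpow := hVm2
      ode := hODE }
  have hlim := hW.tendsto_rpow_sub_one_div hm
  have hL : 0 < (m - 1) / m * cstar := by
    have : 0 < m - 1 := by linarith
    positivity
  have hUnonneg : ∀ᶠ z in 𝓝[<] 0, 0 ≤ U z :=
    eventually_nhdsWithin_of_forall fun z hz => (hU01 z hz).1.le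
  refine ⟨fun ⟨_, hm2⟩ => tendsto_div_nhdsLT_zero_of_lt_one (by linarith) (by linarith)
      hUnonneg hlim, fun hm2 => ⟨-((m - 1) / m * cstar), by linarith, ?_⟩,
    fun hm2 => tendsto_div_nhdsLT_zero_atBot_of_one_lt (by linarith) hL hUnonneg hlim⟩
  subst hm2
  norm_num at hlim ⊢
  simpa [div_neg] using hlim.neg

/-- Trichotomy for the one-sided derivative of the sharp minimal
travelling wave at 0, i.e. for `lim_{z → 0⁻} U(z)/z`: it is `0` if `1 < m < 2`,
a finite negative number if `m = 2`, and `-∞` if `m > 2`. -/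
theorem travelling_wave_left_derivative_trichotomy
    (m cstar : ℝ) (U : ℝ → ℝ)
    (hm : 1 < m) (hc : 0 < cstar)
    (hUcont : Continuous U)
    (hU0 : ∀ z : ℝ, 0 ≤ z → U z = 0)
    (hU01 : ∀ z : ℝ, z < 0 → 0 < U z ∧ U z < 1)
    (hUlim : Tendsto U atBot (nhds 1))
    (hUC2 : ContDiffOn ℝ 2 U (Set.Iio 0))
    (hVm : ContDiff ℝ 1 (fun z => U z ^ m))
    (hVm0 : deriv (fun z => U z ^ m) 0 = 0)
    (hVm2 : ∀ z : ℝ, z < 0 → DifferentiableAt ℝ (deriv (fun z => U z ^ m)) z)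
    (hODE : ∀ z : ℝ, z < 0 →
      deriv (deriv (fun z => U z ^ m)) z + cstar * deriv U z + U z * (1 - U z) = 0)
    (hU' : ∀ z : ℝ, z < 0 → deriv U z < 0) :
    ((1 < m ∧ m < 2) →
      Tendsto (fun z : ℝ => U z / z) (nhdsWithin 0 (Set.Iio 0)) (nhds 0)) ∧
    (m = 2 →
      ∃ l : ℝ, l < 0 ∧
        Tendsto (fun z : ℝ => U z / z) (nhdsWithin 0 (Set.Iio 0)) (nhds l)) ∧
    (2 < m →
      Tendsto (fun z : ℝ => U z / z) (nhdsWithin 0 (Set.Iio 0)) atBot) :=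
  travelling_wave_left_derivative_trichotomy_general m cstar U hm hc hUcont hU0 hU01 hUC2 hVm hVm0
    hVm2 hODE hU'
end
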